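/- For every nonnegative integer k and every cell c of the 2^k × 2^k grid, the grid with c removed can be tiled by planar L-trominoes. -/

import Mathlib

/-- A planar L-tromino: a cell together with two cells adjacent to it along
the two coordinate axes (a translate/rotation of `{(0,0),(1,0),(0,1)}`). -/
def IsTromino2 (s : Finset (ℤ × ℤ)) : Prop :=
  ∃ (c : ℤ × ℤ) (ε₁ ε₂ : ℤ),
    (ε₁ = 1 ∨ ε₁ = -1) ∧ (ε₂ = 1 ∨ ε₂ = -1) ∧
    s = {c, c + (ε₁, 0), c + (0, ε₂)}

/-- The grid `[0,a) × [0,b)` in `ℤ²`. -/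
noncomputable def grid (a b : ℕ) : Finset (ℤ × ℤ) :=
  (Finset.Ico (0 : ℤ) a) ×ˢ (Finset.Ico (0 : ℤ) b)

/-- `T` is a tiling of the region `R` by planar trominoes. -/
def IsTiling2 (R : Finset (ℤ × ℤ)) (T : Finset (Finset (ℤ × ℤ))) : Prop :=
  (∀ t ∈ T, IsTromino2 t) ∧
    (∀ t₁ ∈ T, ∀ t₂ ∈ T, t₁ ≠ t₂ → Disjoint t₁ t₂) ∧
    (∀ x, x ∈ R ↔ ∃ t ∈ T, x ∈ t)

/-!
Induction on `k`, for squares in every position. Cut the `2^(k+1)`-square into four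
`2^k`-quadrants; the missing cell lies in one of them. The three central cells belonging to the
other quadrants form an L-tromino: lay it down, and each quadrant is now missing exactly one cell,
so it is tiled by the induction hypothesis.
-/

open scoped Pointwise

def Tileable (R : Finset (ℤ × ℤ)) : Prop :=
  ∃ T, IsTiling2 R T

lemma IsTiling2.subset {R : Finset (ℤ × ℤ)} {T : Finset (Finset (ℤ × ℤ))} (h : IsTiling2 R T)
    {t : Finset (ℤ × ℤ)} (ht : t ∈ T) : t ⊆ R :=
  fun x hx => (h.2.2 x).2 ⟨t, ht, hx⟩

lemma IsTiling2.union {R R' : Finset (ℤ × ℤ)} {T T' : Finset (Finset (ℤ × ℤ))}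
    (h : IsTiling2 R T) (h' : IsTiling2 R' T') (hd : Disjoint R R') :
    IsTiling2 (R ∪ R') (T ∪ T') := by
  refine ⟨?_, ?_, fun x => ?_⟩
  · intro t ht
    rcases Finset.mem_union.1 ht with ht | ht
    exacts [h.1 t ht, h'.1 t ht]
  · intro t₁ h₁ t₂ h₂ hne
    rcases Finset.mem_union.1 h₁ with h₁ | h₁ <;> rcases Finset.mem_union.1 h₂ with h₂ | h₂
    · exact h.2.1 t₁ h₁ t₂ h₂ hne
    · exact hd.mono (h.subset h₁) (h'.subset h₂)
    · exact hd.symm.mono (h'.subset h₁) (h.subset h₂)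
    · exact h'.2.1 t₁ h₁ t₂ h₂ hne
  · simp only [Finset.mem_union, h.2.2 x, h'.2.2 x, or_and_right, exists_or]

lemma isTiling2_singleton {s : Finset (ℤ × ℤ)} (h : IsTromino2 s) : IsTiling2 s {s} :=
  ⟨by simpa using h, by simp, by simp⟩

lemma tileable_empty : Tileable ∅ :=
  ⟨∅, by simp, by simp, by simp⟩

lemma Tileable.union {R R' : Finset (ℤ × ℤ)} (h : Tileable R) (h' : Tileable R')
    (hd : Disjoint R R') : Tileable (R ∪ R') :=
  let ⟨T, hT⟩ := h
  let ⟨T', hT'⟩ := h'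
  ⟨T ∪ T', hT.union hT' hd⟩

lemma Tileable.biUnion {ι : Type*} [DecidableEq ι] {s : Finset ι} {R : ι → Finset (ℤ × ℤ)}
    (hR : (s : Set ι).PairwiseDisjoint R) (h : ∀ i ∈ s, Tileable (R i)) :
    Tileable (s.biUnion R) := by
  induction s using Finset.induction_on with
  | empty => exact tileable_empty
  | insert i s hi ih =>
    rw [Finset.coe_insert, Set.pairwiseDisjoint_insert_of_notMem (by exact_mod_cast hi)] at hR
    rw [Finset.biUnion_insert]
    refine (h i (s.mem_insert_self i)).union (ih hR.1 fun j hj => h j (Finset.mem_insert_of_mem hj))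
      ((Finset.disjoint_biUnion_right _ _ _).2 fun j hj => hR.2 j hj)

lemma Tileable.erase_biUnion {ι : Type*} [DecidableEq ι] {s : Finset ι}
    {Q : ι → Finset (ℤ × ℤ)} (hQ : (s : Set ι).PairwiseDisjoint Q) {d : ι → ℤ × ℤ}
    (hd : ∀ i ∈ s, d i ∈ Q i) (h : ∀ i ∈ s, Tileable ((Q i).erase (d i))) {i₀ : ι}
    (hi₀ : i₀ ∈ s) (htrom : IsTromino2 ((s.erase i₀).image d)) :
    Tileable ((s.biUnion Q).erase (d i₀)) := by
  have hdinj : ∀ i ∈ s, ∀ j ∈ s, ∀ x ∈ Q i, x = d j → i = j := fun i hi j hj x hx hxj =>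
    hQ.elim_finset hi hj x hx (hxj ▸ hd j hj)
  have hsplit : (s.biUnion Q).erase (d i₀) =
      s.biUnion (fun i => (Q i).erase (d i)) ∪ (s.erase i₀).image d := by
    ext x
    simp only [Finset.mem_erase, Finset.mem_biUnion, Finset.mem_union, Finset.mem_image]
    constructor
    · rintro ⟨hx, i, hi, hxi⟩
      by_cases hxd : x = d i
      · exact Or.inr ⟨i, ⟨fun h => hx (h ▸ hxd), hi⟩, hxd.symm⟩
      · exact Or.inl ⟨i, hi, hxd, hxi⟩
    · rintro (⟨i, hi, hxd, hxi⟩ | ⟨i, ⟨hne, hi⟩, rfl⟩)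
      · exact ⟨fun h => hxd (hdinj i hi i₀ hi₀ x hxi h ▸ h), i, hi, hxi⟩
      · exact ⟨fun h => hne (hdinj i hi i₀ hi₀ _ (hd i hi) h), i, hi, hd i hi⟩
  have hdisj : Disjoint (s.biUnion fun i => (Q i).erase (d i)) ((s.erase i₀).image d) := by
    simp only [Finset.disjoint_left, Finset.mem_biUnion, Finset.mem_erase, Finset.mem_image]
    rintro x ⟨i, hi, hxd, hxi⟩ ⟨j, ⟨-, hj⟩, rfl⟩
    exact hxd (hdinj i hi j hj _ hxi rfl ▸ rfl)
  rw [hsplit]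
  exact (Tileable.biUnion (fun i hi j hj hij => (hQ hi hj hij).mono
    (Finset.erase_subset _ _) (Finset.erase_subset _ _)) h).union
    ⟨_, isTiling2_singleton htrom⟩ hdisj

lemma IsTromino2.vadd {s : Finset (ℤ × ℤ)} (h : IsTromino2 s) (v : ℤ × ℤ) :
    IsTromino2 (v +ᵥ s) := by
  obtain ⟨c, ε₁, ε₂, h₁, h₂, rfl⟩ := h
  refine ⟨v + c, ε₁, ε₂, h₁, h₂, ?_⟩
  simp only [Finset.vadd_finset_insert, Finset.vadd_finset_singleton, vadd_eq_add, add_assoc]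

lemma mem_vadd_grid {v x : ℤ × ℤ} {a b : ℕ} :
    x ∈ v +ᵥ grid a b ↔ v.1 ≤ x.1 ∧ x.1 < v.1 + a ∧ v.2 ≤ x.2 ∧ x.2 < v.2 + b := by
  rw [← Finset.neg_vadd_mem_iff]
  simp only [grid, Finset.mem_product, Finset.mem_Ico, vadd_eq_add, Prod.fst_add, Prod.snd_add,
    Prod.fst_neg, Prod.snd_neg]
  omega

lemma grid_two_two : grid 2 2 = {(0, 0), (1, 0), (0, 1), (1, 1)} := by decide

lemma isTromino2_grid_two_erase {e : ℤ × ℤ} (he : e ∈ grid 2 2) :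
    IsTromino2 ((grid 2 2).erase e) := by
  rw [grid_two_two] at he ⊢
  simp only [Finset.mem_insert, Finset.mem_singleton] at he
  rcases he with rfl | rfl | rfl | rfl
  · exact ⟨(1, 1), -1, -1, by simp, by simp, by decide⟩
  · exact ⟨(0, 1), 1, -1, by simp, by simp, by decide⟩
  · exact ⟨(1, 0), -1, 1, by simp, by simp, by decide⟩
  · exact ⟨(0, 0), 1, 1, by simp, by simp, by decide⟩

lemma vadd_grid_two_mul (v : ℤ × ℤ) (n : ℕ) :
    v +ᵥ grid (2 * n) (2 * n) = (grid 2 2).biUnion fun e => (v + (n : ℤ) • e) +ᵥ grid n n := by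
  ext x
  simp only [grid_two_two, Finset.biUnion_insert, Finset.singleton_biUnion, Finset.mem_union,
    mem_vadd_grid, Prod.smul_mk, smul_eq_mul, Prod.fst_add, Prod.snd_add,
    Nat.cast_mul, Nat.cast_ofNat]
  omega

lemma pairwiseDisjoint_vadd_grid (v : ℤ × ℤ) (n : ℕ) :
    (grid 2 2 : Set (ℤ × ℤ)).PairwiseDisjoint fun e => (v + (n : ℤ) • e) +ᵥ grid n n := by
  intro e he e' he' hne
  rw [Finset.mem_coe, grid_two_two] at he he'
  simp only [Finset.mem_insert, Finset.mem_singleton] at he he'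
  simp only [Function.onFun, Finset.disjoint_left, mem_vadd_grid]
  rcases he with rfl | rfl | rfl | rfl <;> rcases he' with rfl | rfl | rfl | rfl <;>
    first
    | exact absurd rfl hne
    | (intro x; simp only [Prod.smul_mk, smul_eq_mul, Prod.fst_add, Prod.snd_add]; omega)

theorem tileable_vadd_grid_pow_two_erase (k : ℕ) (v : ℤ × ℤ) {c : ℤ × ℤ}
    (hc : c ∈ v +ᵥ grid (2 ^ k) (2 ^ k)) : Tileable ((v +ᵥ grid (2 ^ k) (2 ^ k)).erase c) := by
  induction k generalizing v c with
  | zero =>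
    rw [pow_zero] at hc ⊢
    have hempty : (v +ᵥ grid 1 1).erase c = ∅ := by
      simp only [mem_vadd_grid, Nat.cast_one] at hc
      ext x
      simp only [Finset.mem_erase, mem_vadd_grid, Nat.cast_one, Finset.notMem_empty, iff_false]
      rintro ⟨hxc, hx⟩
      exact hxc (Prod.ext (by omega) (by omega))
    exact hempty ▸ tileable_empty
  | succ k ih =>
    have hn : 0 < 2 ^ k := by positivity
    rw [pow_succ', vadd_grid_two_mul] at hc ⊢
    generalize 2 ^ k = n at hn hc ih ⊢
    obtain ⟨e₀, he₀, hce₀⟩ := Finset.mem_biUnion.1 hc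
    -- `w + e` is the corner of quadrant `e` at the centre of the big square
    set w : ℤ × ℤ := v + ((n : ℤ) - 1, (n : ℤ) - 1)
    have hcorner : ∀ e ∈ grid 2 2, w + e ∈ (v + (n : ℤ) • e) +ᵥ grid n n := by
      intro e he
      rw [grid_two_two] at he
      simp only [Finset.mem_insert, Finset.mem_singleton] at he
      rcases he with rfl | rfl | rfl | rfl <;>
        simp only [mem_vadd_grid, Prod.smul_mk, smul_eq_mul, Prod.fst_add, Prod.snd_add, w] <;>
        omega
    obtain ⟨d, hd₀, hd_ne⟩ : ∃ d : ℤ × ℤ → ℤ × ℤ, d e₀ = c ∧ ∀ e ≠ e₀, d e = w + e :=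
      ⟨Function.update (w + ·) e₀ c, Function.update_self _ _ _,
        fun e h => Function.update_of_ne h _ _⟩
    have hd : ∀ e ∈ grid 2 2, d e ∈ (v + (n : ℤ) • e) +ᵥ grid n n := by
      intro e he
      by_cases h : e = e₀
      · rwa [h, hd₀]
      · rw [hd_ne e h]
        exact hcorner e he
    have htrom : IsTromino2 (((grid 2 2).erase e₀).image d) := by
      rw [Finset.image_congr fun e he => hd_ne e (Finset.ne_of_mem_erase he)]
      exact (isTromino2_grid_two_erase he₀).vadd w
    rw [← hd₀]
    exact Tileable.erase_biUnion (pairwiseDisjoint_vadd_grid v n) hd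
      (fun e he => ih _ (hd e he)) he₀ htrom

/-- Golomb's theorem: every deficient `2^k × 2^k` grid can be tiled by
planar L-trominoes. -/
theorem tile_deficient_pow_two (k : ℕ) (c : ℤ × ℤ) (hc : c ∈ grid (2 ^ k) (2 ^ k)) :
    ∃ T : Finset (Finset (ℤ × ℤ)), IsTiling2 ((grid (2 ^ k) (2 ^ k)).erase c) T := by
  rw [← zero_vadd (ℤ × ℤ) (grid (2 ^ k) (2 ^ k))] at hc ⊢
  exact tileable_vadd_grid_pow_two_erase k 0 hc
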